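/- arXiv:2605.10053 — 5 statements merged into one kernel-verified Lean document; each statement's English description precedes it below -/
import Mathlib

section
/- Let E/F be a quadratic separable field extension with nontrivial automorphism σ, let (V,h) be a finite-dimensional nondegenerate hermitian space over E, and let γ ∈ GL_E(V) satisfy h(γv, γw) = h(v,w) for all v,w (i.e., γ is unitary). View V as an E[T]-module with T acting by γ. If ℘, ℘' ∈ E[T] are monic irreducible polynomials with nonzero constant terms such that ℘' is not equal to σ(℘)^∨ (the dual of the σ-conjugate of ℘), then for all v in the ℘-primary component V{℘} and all v' in the ℘'-primary component V{℘'}, we have h(v, v') = 0. -/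
open Polynomial

/-- The dual polynomial `f^∨(T) = f(0)⁻¹ T^{deg f} f(1/T)`. -/
noncomputable def dualPoly {E : Type*} [Field E] (f : Polynomial E) : Polynomial E :=
  Polynomial.C (f.coeff 0)⁻¹ * f.reverse

section helpers
variable {E : Type*} [Field E]

lemma myReverseReverse {f : E[X]} (h0 : f.coeff 0 ≠ 0) : f.reverse.reverse = f := by
  have hf : f ≠ 0 := fun hh => h0 (by simp [hh])
  have ht : f.natTrailingDegree = 0 := natTrailingDegree_eq_zero.mpr (Or.inr h0)
  have hd : f.reverse.natDegree = f.natDegree := by rw [reverse_natDegree, ht, Nat.sub_zero]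
  ext n
  rw [coeff_reverse, hd, coeff_reverse, revAt_invol]

lemma myIrreducibleReverse {f : E[X]} (hf : Irreducible f) (h0 : f.coeff 0 ≠ 0) :
    Irreducible f.reverse := by
  have hfne : f ≠ 0 := fun hh => h0 (by simp [hh])
  have ht : f.natTrailingDegree = 0 := natTrailingDegree_eq_zero.mpr (Or.inr h0)
  have hd : f.reverse.natDegree = f.natDegree := by rw [reverse_natDegree, ht, Nat.sub_zero]
  have hdpos : 0 < f.natDegree := hf.natDegree_pos
  constructor
  · intro hu
    have := natDegree_eq_zero_of_isUnit hu
    omega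
  · intro a b hab
    have hc0 : a.coeff 0 * b.coeff 0 ≠ 0 := by
      have : (a * b).coeff 0 = f.leadingCoeff := by rw [← hab, coeff_zero_reverse]
      rw [mul_coeff_zero] at this
      rw [this]
      exact leadingCoeff_ne_zero.mpr hfne
    have ha0 : a.coeff 0 ≠ 0 := left_ne_zero_of_mul hc0
    have hb0 : b.coeff 0 ≠ 0 := right_ne_zero_of_mul hc0
    have hfab : f = a.reverse * b.reverse := by
      rw [← reverse_mul_of_domain, ← hab, myReverseReverse h0]
    rcases hf.isUnit_or_isUnit hfab with hu | hu
    · left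
      have hna : a.reverse.natDegree = 0 := natDegree_eq_zero_of_isUnit hu
      have : a.natDegree = 0 := by
        have := reverse_natDegree a
        have hta : a.natTrailingDegree = 0 := natTrailingDegree_eq_zero.mpr (Or.inr ha0)
        omega
      rw [eq_C_of_natDegree_eq_zero this]
      exact isUnit_C.mpr (isUnit_iff_ne_zero.mpr ha0)
    · right
      have hnb : b.reverse.natDegree = 0 := natDegree_eq_zero_of_isUnit hu
      have : b.natDegree = 0 := by
        have := reverse_natDegree b
        have htb : b.natTrailingDegree = 0 := natTrailingDegree_eq_zero.mpr (Or.inr hb0)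
        omega
      rw [eq_C_of_natDegree_eq_zero this]
      exact isUnit_C.mpr (isUnit_iff_ne_zero.mpr hb0)

lemma myDualPolyMonic {f : E[X]} (h0 : f.coeff 0 ≠ 0) : (dualPoly f).Monic := by
  have hfne : f ≠ 0 := fun hh => h0 (by simp [hh])
  have ht : f.natTrailingDegree = 0 := natTrailingDegree_eq_zero.mpr (Or.inr h0)
  unfold dualPoly
  unfold Monic
  rw [leadingCoeff_mul, leadingCoeff_C, reverse_leadingCoeff, trailingCoeff, ht]
  exact inv_mul_cancel₀ h0

lemma myCommuteAeval {S : Type*} [Ring S] [Algebra E S] {x y : S} (hc : Commute x y)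
    (f : E[X]) : Commute (aeval x f) y := by
  induction f using Polynomial.induction_on' with
  | add p q hp hq => rw [map_add]; exact hp.add_left hq
  | monomial n a =>
    rw [aeval_monomial]
    exact (Algebra.commute_algebraMap_left a y).mul_left (hc.pow_left n)

lemma myPowCancel {S : Type*} [Ring S] {A B : S} (hBA : B * A = 1) (j : ℕ) :
    B ^ j * A ^ j = 1 := by
  induction j with
  | zero => simp
  | succ n ih =>
    rw [pow_succ, pow_succ', mul_assoc, ← mul_assoc B A, hBA, one_mul, ih]

lemma myPowSub {S : Type*} [Ring S] {A B : S} (hBA : B * A = 1) {j d : ℕ} (hjd : j ≤ d) :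
    B ^ j * A ^ d = A ^ (d - j) := by
  rw [← pow_mul_pow_sub A hjd, ← mul_assoc, myPowCancel hBA, one_mul]

lemma myReverseAeval {S : Type*} [Ring S] [Algebra E S] {A B : S} (hBA : B * A = 1)
    (g : E[X]) : aeval A g.reverse = aeval B g * A ^ g.natDegree := by
  set d := g.natDegree with hdd
  have h1 : aeval A g.reverse = ∑ i ∈ Finset.range (d + 1), g.coeff (d - i) • A ^ (d - (d - i)) := by
    rw [aeval_eq_sum_range' (lt_of_le_of_lt g.reverse_natDegree_le (Nat.lt_succ_self d))]
    refine Finset.sum_congr rfl fun i hi => ?_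
    have hid : i ≤ d := Nat.lt_succ_iff.mp (Finset.mem_range.mp hi)
    rw [coeff_reverse, revAt_le hid, Nat.sub_sub_self hid]
  have h2 : ∑ i ∈ Finset.range (d + 1), g.coeff (d - i) • A ^ (d - (d - i)) =
      ∑ j ∈ Finset.range (d + 1), g.coeff j • A ^ (d - j) := by
    have := Finset.sum_range_reflect (fun j => g.coeff j • A ^ (d - j)) (d + 1)
    simpa using this
  rw [h1, h2]
  rw [aeval_eq_sum_range' (Nat.lt_succ_self d), Finset.sum_mul]
  refine Finset.sum_congr rfl fun i hi => ?_
  have hid : i ≤ d := Nat.lt_succ_iff.mp (Finset.mem_range.mp hi)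
  rw [smul_mul_assoc, myPowSub hBA hid]

end helpers

/-- Primary components of a unitary automorphism corresponding to monic irreducible
polynomials `℘'` and `℘` with `℘' ≠ σ(℘)^∨` are orthogonal for the hermitian form. -/
theorem hermitian_primary_components_orthogonal
    {E V : Type*} [Field E] [AddCommGroup V] [Module E V] [FiniteDimensional E V]
    (σ : E ≃+* E) (hσ : ∀ x, σ (σ x) = x) (hσne : σ ≠ RingEquiv.refl E)
    -- a hermitian form, `E`-linear in the second argument, `σ`-semilinear in the first
    (h : V →ₛₗ[σ.toRingHom] (V →ₗ[E] E))
    (hherm : ∀ v w : V, h w v = σ (h v w))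
    (hnd : ∀ v : V, (∀ w : V, h v w = 0) → v = 0)
    -- a unitary automorphism
    (γ : V ≃ₗ[E] V) (hγ : ∀ v w : V, h (γ v) (γ w) = h v w)
    (℘ ℘' : Polynomial E)
    (hm : ℘.Monic) (hm' : ℘'.Monic) (hi : Irreducible ℘) (hi' : Irreducible ℘')
    (h0 : ℘.coeff 0 ≠ 0) (h0' : ℘'.coeff 0 ≠ 0)
    (hne : ℘' ≠ dualPoly (℘.map σ.toRingHom))
    (v v' : V)
    (hv : ∃ k : ℕ, ((Polynomial.aeval (γ.toLinearMap : Module.End E V) ℘) ^ k) v = 0)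
    (hv' : ∃ k : ℕ, ((Polynomial.aeval (γ.toLinearMap : Module.End E V) ℘') ^ k) v' = 0) :
    h v v' = 0 := by
  obtain ⟨k, hk⟩ := hv
  obtain ⟨m, hkm⟩ := hv'
  set A : Module.End E V := (γ.toLinearMap : Module.End E V) with hA
  set B : Module.End E V := (γ.symm.toLinearMap : Module.End E V) with hB
  have hAB : A * B = 1 := by ext w; simp [hA, hB, Module.End.mul_apply]
  have hBA : B * A = 1 := by ext w; simp [hA, hB, Module.End.mul_apply]
  have hCAB : Commute A B := by rw [Commute, SemiconjBy, hAB, hBA]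
  -- basic adjunction facts
  have fact1 : ∀ x y : V, h (A x) y = h x (B y) := by
    intro x y
    have := hγ x (γ.symm y)
    simpa [hA, hB] using this
  have hpow : ∀ (n : ℕ) (x y : V), h ((A ^ n) x) y = h x ((B ^ n) y) := by
    intro n
    induction n with
    | zero => simp
    | succ n ih =>
      intro x y
      rw [pow_succ, pow_succ', Module.End.mul_apply, Module.End.mul_apply, ih]
      exact fact1 _ _
  -- adjunction for polynomials
  have adj : ∀ (p : E[X]) (x y : V),
      h ((aeval A p) x) y = h x ((aeval B (p.map σ.toRingHom)) y) := by
    intro p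
    induction p using Polynomial.induction_on' with
    | add p q hp hq =>
      intro x y
      simp only [map_add, LinearMap.add_apply, Polynomial.map_add]
      rw [hp, hq]
    | monomial n a =>
      intro x y
      rw [aeval_monomial, Polynomial.map_monomial, aeval_monomial]
      simp only [Module.End.mul_apply, Module.algebraMap_end_apply]
      rw [LinearMap.map_smulₛₗ, LinearMap.smul_apply, hpow n x y,
        ← (h x).map_smul]
  -- the dual polynomial setup
  set g : E[X] := ℘.map σ.toRingHom with hg
  have hgc : g.coeff 0 = σ (℘.coeff 0) := by simp [hg, coeff_map]
  have hg0 : g.coeff 0 ≠ 0 := by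
    rw [hgc]
    simpa using h0
  have hgne : g ≠ 0 := fun hh => hg0 (by simp [hh])
  have hgirr : Irreducible g := by
    have : g = (Polynomial.mapEquiv σ : E[X] ≃+* E[X]) ℘ := rfl
    rw [this]
    exact hi.map (Polynomial.mapEquiv σ).toMulEquiv
  set c : E := g.coeff 0 with hc
  set q : E[X] := dualPoly g with hq
  have hqmonic : q.Monic := myDualPolyMonic hg0
  have hqirr : Irreducible q := by
    rw [hq]
    unfold dualPoly
    rw [irreducible_isUnit_mul (isUnit_C.mpr (isUnit_iff_ne_zero.mpr (inv_ne_zero hg0)))]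
    exact myIrreducibleReverse hgirr hg0
  have hrevq : g.reverse = C c * q := by
    rw [hq]
    unfold dualPoly
    rw [← mul_assoc, ← C_mul, mul_inv_cancel₀ hg0, C_1, one_mul]
  -- Step A : h v ((aeval A q)^k u) = 0 for all u
  have stepA : ∀ u : V, h v (((aeval A q) ^ k) u) = 0 := by
    have base : ∀ w : V, h v ((aeval B (g ^ k)) w) = 0 := by
      intro w
      have := adj (℘ ^ k) v w
      rw [map_pow, hk, LinearMap.map_zero, Polynomial.map_pow] at this
      simpa [hg] using this.symm
    -- aeval B g = aeval A g.reverse * B ^ g.natDegree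
    have hABd : ∀ dd : ℕ, A ^ dd * B ^ dd = 1 := fun dd => myPowCancel hAB dd
    have key : aeval B g = aeval A g.reverse * B ^ g.natDegree := by
      have := myReverseAeval hBA g
      rw [this, mul_assoc, hABd g.natDegree, mul_one]
    have keyk : aeval B (g ^ k) =
        (aeval A g.reverse) ^ k * B ^ (g.natDegree * k) := by
      rw [map_pow, key, (myCommuteAeval (hCAB.pow_right g.natDegree) g.reverse).mul_pow,
        ← pow_mul]
    intro u
    have := base ((A ^ (g.natDegree * k)) u)
    rw [keyk, Module.End.mul_apply, ← Module.End.mul_apply (B ^ (g.natDegree * k)),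
      myPowCancel hBA (g.natDegree * k), Module.End.one_apply] at this
    have hsm : (aeval A) g.reverse ^ k = c ^ k • ((aeval A) q) ^ k := by
      have h2 : (aeval A) g.reverse = c • (aeval A) q := by
        rw [hrevq, map_mul, aeval_C, ← Algebra.smul_def]
      rw [h2, _root_.smul_pow]
    rw [hsm, LinearMap.smul_apply, (h v).map_smul, smul_eq_mul] at this
    exact (mul_eq_zero.mp this).resolve_left (pow_ne_zero k hg0)
  -- Step B : coprimality and conclusion
  have hqne' : ¬ ℘' ∣ q := by
    intro hdvd
    exact hne (Polynomial.eq_of_monic_of_associated hm' hqmonic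
      (hi'.associated_of_dvd hqirr hdvd))
  have hcop : IsCoprime (℘' ^ m) (q ^ k) := (hi'.coprime_iff_not_dvd.mpr hqne').pow
  obtain ⟨a, b, hab⟩ := hcop
  have hab2 : q ^ k * b + a * ℘' ^ m = 1 := by rw [← hab]; ring
  have h1 : (aeval A (q ^ k * b + a * ℘' ^ m)) v' = v' := by rw [hab2]; simp
  rw [map_add, LinearMap.add_apply, map_mul, map_mul, Module.End.mul_apply,
    Module.End.mul_apply, map_pow, map_pow, hkm, LinearMap.map_zero, add_zero] at h1
  rw [← h1]
  exact stepA _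
end

section
/- Let E/F be a quadratic separable extension with conjugation σ, (V,h) a nondegenerate hermitian space over E, and γ a unitary automorphism of (V,h). View V as an E[T]-module via γ. Let ℘ ∈ E[T] be a monic irreducible polynomial (necessarily with ℘(0) ≠ 0 since γ is invertible) such that ℘ = σ(℘)^∨. Then the subspace W := Σ_{k≥1} (ker(℘(γ)^k) ∩ im(℘(γ)^k)) of V is totally isotropic for h, i.e., h(v, v') = 0 for all v, v' ∈ W. -/
open Polynomial

/-- For a unitary automorphism `γ` and a monic irreducible `℘` with `℘ = σ(℘)^∨`,
the subspace `W = Σ_{k ≥ 1} (ker ℘(γ)^k ∩ im ℘(γ)^k)` is totally isotropic. -/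
theorem isotropic_sum_ker_inf_range
    {E V : Type*} [Field E] [AddCommGroup V] [Module E V] [FiniteDimensional E V]
    (σ : E ≃+* E) (hσ : ∀ x, σ (σ x) = x) (hσne : σ ≠ RingEquiv.refl E)
    (h : V →ₛₗ[σ.toRingHom] (V →ₗ[E] E))
    (hherm : ∀ v w : V, h w v = σ (h v w))
    (hnd : ∀ v : V, (∀ w : V, h v w = 0) → v = 0)
    (γ : V ≃ₗ[E] V) (hγ : ∀ v w : V, h (γ v) (γ w) = h v w)
    (℘ : Polynomial E) (hm : ℘.Monic) (hi : Irreducible ℘) (h0 : ℘.coeff 0 ≠ 0)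
    (hdual : ℘ = dualPoly (℘.map σ.toRingHom)) :
    ∀ v ∈ (⨆ k : ℕ, ⨆ _ : 1 ≤ k,
        LinearMap.ker ((Polynomial.aeval (γ.toLinearMap : Module.End E V) ℘) ^ k) ⊓
          LinearMap.range ((Polynomial.aeval (γ.toLinearMap : Module.End E V) ℘) ^ k)),
      ∀ v' ∈ (⨆ k : ℕ, ⨆ _ : 1 ≤ k,
        LinearMap.ker ((Polynomial.aeval (γ.toLinearMap : Module.End E V) ℘) ^ k) ⊓
          LinearMap.range ((Polynomial.aeval (γ.toLinearMap : Module.End E V) ℘) ^ k)),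
      h v v' = 0 := by
  classical
  set g : Module.End E V := (γ.toLinearMap : Module.End E V) with hgdef
  set g' : Module.End E V := (γ.symm.toLinearMap : Module.End E V) with hg'def
  have hgg' : g * g' = 1 := by
    ext v; simp [hgdef, hg'def, Module.End.mul_apply]
  have hg'g : g' * g = 1 := by
    ext v; simp [hgdef, hg'def, Module.End.mul_apply]
  have hcomm : Commute g g' := by
    show g * g' = g' * g; rw [hgg', hg'g]
  have hpow : ∀ i : ℕ, g ^ i * g' ^ i = 1 := fun i => by
    rw [← hcomm.mul_pow, hgg', one_pow]
  have hpow' : ∀ i : ℕ, g' ^ i * g ^ i = 1 := fun i => by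
    rw [← hcomm.symm.mul_pow, hg'g, one_pow]
  have hkey : ∀ {i N : ℕ}, i ≤ N → g ^ N * g' ^ i = g ^ (N - i) := by
    intro i N hiN
    calc g ^ N * g' ^ i = g ^ (N - i) * g ^ i * g' ^ i := by
          rw [← pow_add, Nat.sub_add_cancel hiN]
      _ = g ^ (N - i) := by rw [mul_assoc, hpow, mul_one]
  -- one-step adjoint
  have step1 : ∀ v w : V, h (g v) w = h v (g' w) := by
    intro v w
    have := hγ v (γ.symm w)
    rw [LinearEquiv.apply_symm_apply] at this
    simpa [hgdef, hg'def] using this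
  -- adjoint for polynomials
  have adj : ∀ (f : E[X]) (v w : V),
      h ((aeval g f) v) w = h v ((aeval g' (f.map σ.toRingHom)) w) := by
    intro f
    induction f using Polynomial.induction_on with
    | C a =>
      intro v w
      simp [aeval_C, Module.algebraMap_end_apply, map_smulₛₗ, smul_eq_mul]
      exact congrArg (fun f => f w) (h.map_smulₛₗ a v)
    | add p q hp hq =>
      intro v w
      simp only [map_add, Polynomial.map_add, LinearMap.add_apply, hp, hq]
    | monomial n a ih =>
      intro v w
      have e : (C a : E[X]) * X ^ (n + 1) = (C a * X ^ n) * X := by ring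
      have hc0 : aeval g' (((C a * X ^ n).map σ.toRingHom) * X)
          = aeval g' (X * ((C a * X ^ n).map σ.toRingHom)) := by rw [mul_comm]
      rw [map_mul, map_mul, aeval_X] at hc0
      have l1 : (aeval g ((C a * X ^ n) * X)) v = (aeval g (C a * X ^ n)) (g v) := by
        rw [map_mul, aeval_X, Module.End.mul_apply]
      have l2 : ((C a * X ^ n : E[X]) * X).map σ.toRingHom
          = ((C a * X ^ n).map σ.toRingHom) * X := by
        rw [Polynomial.map_mul, Polynomial.map_X]
      have l3 : (aeval g' (((C a * X ^ n).map σ.toRingHom) * X)) w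
          = g' ((aeval g' ((C a * X ^ n).map σ.toRingHom)) w) := by
        rw [map_mul, aeval_X, hc0, Module.End.mul_apply]
      rw [e, l1, l2, l3, ih (g v) w, step1]
  -- reflect formula
  have reflect_sum : ∀ (f : E[X]) (N : ℕ), f.natDegree ≤ N →
      aeval g (reflect N f) = g ^ N * aeval g' f := by
    intro f N hN
    have hf_sum : f = ∑ i ∈ Finset.range (N + 1), C (f.coeff i) * X ^ i := by
      conv_lhs => rw [f.as_sum_range' (N + 1) (by omega)]
      exact Finset.sum_congr rfl fun i _ => (C_mul_X_pow_eq_monomial).symm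
    have hrefl : ∀ (s : Finset ℕ) (c : ℕ → E),
        reflect N (∑ i ∈ s, C (c i) * X ^ i) = ∑ i ∈ s, C (c i) * X ^ revAt N i := by
      intro s c
      induction s using Finset.induction with
      | empty => simp [reflect_zero]
      | @insert a s ha ihs =>
        rw [Finset.sum_insert ha, reflect_add, reflect_C_mul_X_pow, ihs,
          Finset.sum_insert ha]
    conv_lhs => rw [hf_sum]
    conv_rhs => rw [hf_sum]
    rw [hrefl, map_sum, map_sum, Finset.mul_sum]
    apply Finset.sum_congr rfl
    intro i hi
    have hiN : i ≤ N := by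
      have := Finset.mem_range.mp hi; omega
    rw [revAt_le hiN, map_mul, map_mul, aeval_C, aeval_C, aeval_X_pow, aeval_X_pow,
      ← mul_assoc, ← Algebra.commutes, mul_assoc, hkey hiN]
  -- the dual polynomial relation
  set q : E[X] := ℘.map σ.toRingHom with hqdef
  set n : ℕ := ℘.natDegree with hndef
  have hq_deg : q.natDegree = n := by
    rw [hqdef, hndef]
    exact Polynomial.natDegree_map_eq_of_injective σ.injective ℘
  have hq0 : q.coeff 0 = σ (℘.coeff 0) := by rw [hqdef, coeff_map]; rfl
  have hq0ne : q.coeff 0 ≠ 0 := by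
    rw [hq0]
    exact fun H => h0 (σ.injective (by rw [H, map_zero]))
  have hqrev : q.reverse = C (q.coeff 0) * ℘ := by
    conv_rhs => rw [hdual]
    rw [dualPoly, ← mul_assoc, ← C_mul, mul_inv_cancel₀ hq0ne, C_1, one_mul]
  have h2 : q.reverse = reflect n q := by
    unfold Polynomial.reverse
    rw [hq_deg]
  have h3 : aeval g (C (q.coeff 0) * ℘) = g ^ n * aeval g' q := by
    rw [← hqrev, h2]
    exact reflect_sum q n (le_of_eq hq_deg)
  have hQ : aeval g' q = (q.coeff 0) • (g' ^ n * aeval g ℘) := by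
    have h4 : g' ^ n * (g ^ n * aeval g' q) = aeval g' q := by
      rw [← mul_assoc, hpow', one_mul]
    rw [← h4, ← h3, map_mul, aeval_C, Algebra.smul_def, ← mul_assoc,
      ← Algebra.commutes, mul_assoc]
  -- commutation of g' with polynomials in g
  have hcomm' : ∀ r : E[X], Commute g' (aeval g r) := by
    intro r
    induction r using Polynomial.induction_on with
    | C a => rw [aeval_C]; exact (Algebra.commutes a g').symm
    | add p1 q1 hp1 hq1 => rw [map_add]; exact hp1.add_right hq1
    | monomial m a ihm =>
      have e : (C a : E[X]) * X ^ (m + 1) = (C a * X ^ m) * X := by ring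
      rw [e, map_mul, aeval_X]
      exact ihm.mul_right hcomm.symm
  have hQk : ∀ (k : ℕ) (y : V), ((aeval g ℘) ^ k) y = 0 → ((aeval g' q) ^ k) y = 0 := by
    intro k y hy
    rw [hQ, _root_.smul_pow, ((hcomm' ℘).pow_left n).mul_pow]
    rw [LinearMap.smul_apply, Module.End.mul_apply, hy, map_zero, smul_zero]
  -- core computation
  have comp : ∀ (m : ℕ) (u y : V), ((aeval g ℘) ^ m) y = 0 →
      h (((aeval g ℘) ^ m) u) y = 0 := by
    intro m u y hy
    have e1 : ((aeval g ℘) ^ m : Module.End E V) = aeval g (℘ ^ m) := (map_pow _ _ _).symm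
    rw [e1, adj (℘ ^ m) u y]
    have e2 : (℘ ^ m).map σ.toRingHom = q ^ m := by rw [Polynomial.map_pow]
    rw [e2, map_pow, hQk m y hy]
    exact map_zero (h u)
  have kermono : ∀ {k m : ℕ}, k ≤ m → ∀ y : V,
      ((aeval g ℘) ^ k) y = 0 → ((aeval g ℘) ^ m) y = 0 := by
    intro k m hkm y hy
    have e : (aeval g ℘ : Module.End E V) ^ m = (aeval g ℘) ^ (m - k) * (aeval g ℘) ^ k := by
      rw [← pow_add]; congr 1; omega
    rw [e, Module.End.mul_apply, hy, map_zero]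
  set S : ℕ → Submodule E V := fun k =>
    LinearMap.ker ((aeval g ℘ : Module.End E V) ^ k) ⊓
      LinearMap.range ((aeval g ℘ : Module.End E V) ^ k) with hSdef
  have half : ∀ (k j : ℕ) (x y : V), j ≤ k → x ∈ S k → y ∈ S j → h x y = 0 := by
    intro k j x y hjk hx hy
    obtain ⟨-, u, hu⟩ := hx
    have hy0 : ((aeval g ℘) ^ k) y = 0 := kermono hjk y (LinearMap.mem_ker.mp hy.1)
    rw [← hu]
    exact comp k u y hy0
  have core : ∀ (k j : ℕ) (x y : V), x ∈ S k → y ∈ S j → h x y = 0 := by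
    intro k j x y hx hy
    rcases le_total j k with hjk | hkj
    · exact half k j x y hjk hx hy
    · rw [hherm y x, half j k y x hkj hy hx, map_zero]
  intro v hv v' hv'
  have hle : (⨆ k : ℕ, ⨆ _ : 1 ≤ k, S k) ≤ ⨆ k : ℕ, S k :=
    iSup_mono fun k => iSup_le fun _ => le_rfl
  refine Submodule.iSup_induction (motive := fun x => h x v' = 0) S (hle hv) ?_ ?_ ?_
  · intro k x hx
    refine Submodule.iSup_induction (motive := fun y => h x y = 0) S (hle hv') ?_ ?_ ?_
    · intro j y hy
      exact core k j x y hx hy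
    · exact map_zero (h x)
    · intro a b ha hb
      rw [map_add, ha, hb, add_zero]
  · rw [map_zero, LinearMap.zero_apply]
  · intro a b ha hb
    rw [map_add, LinearMap.add_apply, ha, hb, add_zero]
end

section
/- Let E be a field, V a finite-dimensional E-vector space, γ ∈ End_E(V), and suppose the minimal polynomial of γ is ℘^m for a monic irreducible ℘ ∈ E[T]. For j ≥ 1 define Fil^j V := Σ_{k≥1} (ker(℘(γ)^k) ∩ im(℘(γ)^{k+j-1})). Then (Fil^j V)_{j≥1} is a decreasing filtration of V: Fil^1 V ⊇ Fil^2 V ⊇ ⋯, each Fil^j V is γ-stable, and Fil^j V = 0 for j ≥ m. -/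
open Polynomial

namespace Module.End

variable {R M : Type*} [CommSemiring R] [AddCommMonoid M] [Module R M]

lemma ker_le_comap_of_commute {f g : Module.End R M} (h : Commute f g) :
    LinearMap.ker g ≤ (LinearMap.ker g).comap f := fun x (hx : g x = 0) =>
  show g (f x) = 0 by rw [← Module.End.mul_apply, ← h.eq, Module.End.mul_apply, hx, map_zero]

lemma range_le_comap_of_commute {f g : Module.End R M} (h : Commute f g) :
    LinearMap.range g ≤ (LinearMap.range g).comap f := by
  rintro _ ⟨y, rfl⟩
  exact ⟨f y, by rw [← Module.End.mul_apply, ← h.eq, Module.End.mul_apply]⟩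

def kerRangeFiltration (P : Module.End R M) (j : ℕ) : Submodule R M :=
  ⨆ k : ℕ, ⨆ _ : 1 ≤ k, LinearMap.ker (P ^ k) ⊓ LinearMap.range (P ^ (k + j - 1))

lemma kerRangeFiltration_succ_le (P : Module.End R M) (j : ℕ) :
    P.kerRangeFiltration (j + 1) ≤ P.kerRangeFiltration j := by
  refine iSup₂_mono fun k hk => inf_le_inf_left _ ?_
  rw [show k + (j + 1) - 1 = k + j - 1 + 1 by omega, pow_succ, Module.End.mul_eq_comp]
  exact LinearMap.range_comp_le_range _ _

lemma kerRangeFiltration_le_comap_of_commute {f P : Module.End R M} (h : Commute f P) (j : ℕ) :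
    P.kerRangeFiltration j ≤ (P.kerRangeFiltration j).comap f := by
  refine iSup₂_le fun k hk => ?_
  have hstable := inf_le_inf (ker_le_comap_of_commute (h.pow_right k))
    (range_le_comap_of_commute (h.pow_right (k + j - 1)))
  rw [← Submodule.comap_inf] at hstable
  exact hstable.trans (Submodule.comap_mono (le_iSup₂_of_le k hk le_rfl))

lemma kerRangeFiltration_eq_bot_of_pow_eq_zero {P : Module.End R M} {m j : ℕ} (hP : P ^ m = 0)
    (hj : m ≤ j) : P.kerRangeFiltration j = ⊥ := by
  refine eq_bot_iff.mpr <| iSup₂_le fun k hk => inf_le_right.trans ?_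
  rw [pow_eq_zero_of_le (by omega) hP, LinearMap.range_zero]

end Module.End

theorem filtration_of_primary_endomorphism_general
    {E V : Type*} [Field E] [AddCommGroup V] [Module E V]
    (℘ : Polynomial E)
    (γ : Module.End E V) (mexp : ℕ) (hmin : minpoly E γ = ℘ ^ mexp)
    (Fil : ℕ → Submodule E V)
    (hFil : ∀ j, Fil j = ⨆ k : ℕ, ⨆ _ : 1 ≤ k,
      LinearMap.ker ((Polynomial.aeval γ ℘) ^ k) ⊓
        LinearMap.range ((Polynomial.aeval γ ℘) ^ (k + j - 1))) :
    (∀ j, 1 ≤ j → Fil (j + 1) ≤ Fil j) ∧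
    (∀ j, 1 ≤ j → ∀ v ∈ Fil j, γ v ∈ Fil j) ∧
    (∀ j, mexp ≤ j → Fil j = ⊥) := by
  obtain rfl : Fil = (aeval γ ℘).kerRangeFiltration := funext hFil
  have hnil : aeval γ ℘ ^ mexp = 0 := by rw [← map_pow, ← hmin, minpoly.aeval]
  have hcomm : Commute γ (aeval γ ℘) := by simpa using (Commute.all X ℘).map (aeval γ)
  exact ⟨fun j _ => Module.End.kerRangeFiltration_succ_le _ j,
    fun j _ _ hv => Module.End.kerRangeFiltration_le_comap_of_commute hcomm j hv,
    fun _ hj => Module.End.kerRangeFiltration_eq_bot_of_pow_eq_zero hnil hj⟩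

/-- For an endomorphism `γ` with minimal polynomial `℘^m`, the filtration
`Fil^j V = Σ_{k ≥ 1} (ker ℘(γ)^k ∩ im ℘(γ)^{k+j-1})` is decreasing, `γ`-stable,
and vanishes for `j ≥ m`. -/
theorem filtration_of_primary_endomorphism
    {E V : Type*} [Field E] [AddCommGroup V] [Module E V] [FiniteDimensional E V]
    (℘ : Polynomial E) (hmon : ℘.Monic) (hirr : Irreducible ℘)
    (γ : Module.End E V) (mexp : ℕ) (hmin : minpoly E γ = ℘ ^ mexp)
    (Fil : ℕ → Submodule E V)
    (hFil : ∀ j, Fil j = ⨆ k : ℕ, ⨆ _ : 1 ≤ k,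
      LinearMap.ker ((Polynomial.aeval γ ℘) ^ k) ⊓
        LinearMap.range ((Polynomial.aeval γ ℘) ^ (k + j - 1))) :
    (∀ j, 1 ≤ j → Fil (j + 1) ≤ Fil j) ∧
    (∀ j, 1 ≤ j → ∀ v ∈ Fil j, γ v ∈ Fil j) ∧
    (∀ j, mexp ≤ j → Fil j = ⊥) :=
  filtration_of_primary_endomorphism_general ℘ γ mexp hmin Fil hFil
end

section
/- Let E be a field, ℘ ∈ E[T] monic irreducible, m ≥ 1, r ≥ 1, and V ≅ (E[T]/℘^m)^r as an E[T]-module (with γ = action of T if desired). For j ≥ 1 define Fil^j V := Σ_{k≥1} (ker(℘^k | V) ∩ im(℘^{k+j-1} | V)). Then Fil^j V = ker(℘^k | V) where k = ⌊(m − j + 1)/2⌋ (and Fil^j V = 0 when m − j + 1 < 2). -/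
open Polynomial

/-- The free module of rank `r` over `E[T]/℘^m`. -/
abbrev IsotypicModule (E : Type*) [Field E] (℘ : Polynomial E) (mexp r : ℕ) : Type _ :=
  Fin r → (Polynomial E ⧸ Ideal.span {℘ ^ mexp})

section Aux

variable {E : Type*} [Field E] (℘ : Polynomial E) (mexp r : ℕ)

private lemma smul_mk (f p : Polynomial E) :
    f • (Ideal.Quotient.mk (Ideal.span {℘ ^ mexp}) p)
      = Ideal.Quotient.mk (Ideal.span {℘ ^ mexp}) (f * p) := by
  exact (Algebra.smul_def (A := Polynomial E ⧸ Ideal.span {℘ ^ mexp}) f _).trans (by rw [Ideal.Quotient.algebraMap_eq, ← map_mul])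

private lemma ann_isotypic (x : IsotypicModule E ℘ mexp r) : (℘ ^ mexp) • x = 0 := by
  funext i
  obtain ⟨p, hp⟩ := Ideal.Quotient.mk_surjective (x i)
  show (℘ ^ mexp) • x i = 0
  rw [← hp, smul_mk, Ideal.Quotient.eq_zero_iff_mem]
  exact Ideal.mul_mem_right _ _ (Ideal.subset_span rfl)

private lemma ker_mono {a b : ℕ} (h : a ≤ b) :
    LinearMap.ker (LinearMap.lsmul (Polynomial E) (IsotypicModule E ℘ mexp r) (℘ ^ a)) ≤
    LinearMap.ker (LinearMap.lsmul (Polynomial E) (IsotypicModule E ℘ mexp r) (℘ ^ b)) := by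
  intro x hx
  rw [LinearMap.mem_ker, LinearMap.lsmul_apply] at hx ⊢
  have : ℘ ^ b = ℘ ^ (b - a) * ℘ ^ a := by rw [← pow_add]; congr 1; omega
  rw [this, mul_smul, hx, smul_zero]

private lemma range_mono {a b : ℕ} (h : a ≤ b) :
    LinearMap.range (LinearMap.lsmul (Polynomial E) (IsotypicModule E ℘ mexp r) (℘ ^ b)) ≤
    LinearMap.range (LinearMap.lsmul (Polynomial E) (IsotypicModule E ℘ mexp r) (℘ ^ a)) := by
  rintro x ⟨y, rfl⟩
  refine ⟨℘ ^ (b - a) • y, ?_⟩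
  simp only [LinearMap.lsmul_apply, ← mul_smul, ← pow_add]
  congr 2
  omega

private lemma range_le_ker {s t : ℕ} (h : mexp ≤ s + t) :
    LinearMap.range (LinearMap.lsmul (Polynomial E) (IsotypicModule E ℘ mexp r) (℘ ^ t)) ≤
    LinearMap.ker (LinearMap.lsmul (Polynomial E) (IsotypicModule E ℘ mexp r) (℘ ^ s)) := by
  rintro x ⟨y, rfl⟩
  rw [LinearMap.mem_ker]
  simp only [LinearMap.lsmul_apply, ← mul_smul, ← pow_add]
  have : ℘ ^ (s + t) = ℘ ^ (s + t - mexp) * ℘ ^ mexp := by rw [← pow_add]; congr 1; omega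
  rw [this, mul_smul, ann_isotypic, smul_zero]

private lemma ker_le_range (hmon : ℘.Monic) {c : ℕ} (hc : c ≤ mexp) :
    LinearMap.ker (LinearMap.lsmul (Polynomial E) (IsotypicModule E ℘ mexp r) (℘ ^ c)) ≤
    LinearMap.range (LinearMap.lsmul (Polynomial E) (IsotypicModule E ℘ mexp r)
      (℘ ^ (mexp - c))) := by
  intro x hx
  rw [LinearMap.mem_ker, LinearMap.lsmul_apply] at hx
  have key : ∀ i : Fin r, ∃ w, (℘ ^ (mexp - c)) • w = x i := by
    intro i
    obtain ⟨p, hp⟩ := Ideal.Quotient.mk_surjective (x i)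
    have hz : (℘ ^ c) • x i = 0 := by
      have := congrFun hx i
      simpa using this
    rw [← hp, smul_mk, Ideal.Quotient.eq_zero_iff_mem, Ideal.mem_span_singleton] at hz
    have hd : ℘ ^ (mexp - c) ∣ p := by
      have h1 : ℘ ^ c * ℘ ^ (mexp - c) ∣ ℘ ^ c * p := by
        rw [← pow_add]
        have : c + (mexp - c) = mexp := by omega
        rw [this]; exact hz
      exact (mul_dvd_mul_iff_left (pow_ne_zero c hmon.ne_zero)).mp h1
    obtain ⟨q, hq⟩ := hd
    exact ⟨Ideal.Quotient.mk _ q, by rw [smul_mk, ← hq, hp]⟩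
  refine ⟨fun i => (key i).choose, ?_⟩
  funext i
  simpa using (key i).choose_spec

end Aux

/-- For `V ≅ (E[T]/℘^m)^r`, the filtration
`Fil^j V = Σ_{k ≥ 1}(ker ℘^k ∩ im ℘^{k+j-1})` equals `ker ℘^{⌊(m−j+1)/2⌋}`. -/
theorem filtration_isotypic_eq_kernel
    {E : Type*} [Field E] (℘ : Polynomial E) (hmon : ℘.Monic) (hirr : Irreducible ℘)
    (mexp r : ℕ) (hm : 1 ≤ mexp) (hr : 1 ≤ r) :
    ∀ j : ℕ, 1 ≤ j →
      (⨆ k : ℕ, ⨆ _ : 1 ≤ k,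
          LinearMap.ker (LinearMap.lsmul (Polynomial E) (IsotypicModule E ℘ mexp r)
              (℘ ^ k)) ⊓
            LinearMap.range (LinearMap.lsmul (Polynomial E) (IsotypicModule E ℘ mexp r)
              (℘ ^ (k + j - 1)))) =
        LinearMap.ker (LinearMap.lsmul (Polynomial E) (IsotypicModule E ℘ mexp r)
          (℘ ^ ((mexp - j + 1) / 2))) := by
  intro j hj
  set c : ℕ := (mexp - j + 1) / 2 with hc
  have hcm : c ≤ mexp := by omega
  apply le_antisymm
  · apply iSup_le; intro k; apply iSup_le; intro hk
    by_cases hkc : k ≤ c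
    · exact inf_le_left.trans (ker_mono ℘ mexp r hkc)
    · refine inf_le_right.trans (range_le_ker ℘ mexp r ?_)
      omega
  · by_cases hc0 : c = 0
    · intro x hx
      rw [LinearMap.mem_ker, LinearMap.lsmul_apply, hc0, pow_zero, one_smul] at hx
      rw [hx]
      exact Submodule.zero_mem _
    · refine le_trans ?_ (le_iSup_of_le c (le_iSup_of_le (by omega) le_rfl))
      refine le_inf le_rfl ?_
      refine (ker_le_range ℘ mexp r hmon hcm).trans (range_mono ℘ mexp r ?_)
      omega
end

section
/- Let E/F be a quadratic separable extension with conjugation σ, (V,h) a nondegenerate hermitian space over E, γ a unitary automorphism of (V,h), ℘ ∈ E[T] monic irreducible with ℘ = σ(℘)^∨, and suppose V is ℘-primary as an E[T]-module via γ. Define for all j ∈ ℤ: Fil^j V := Σ_{k≥1} (ker(℘(γ)^k) ∩ im(℘(γ)^{k+j-1})), where im(℘(γ)^{k+j-1}) is interpreted as V if k+j-1 ≤ 0. Then for all j ≥ 0, the orthogonal complement of Fil^{j+1} V with respect to h equals Fil^{-j} V, i.e., (Fil^{j+1} V)^⊥ = Σ_{k≥1} (ker(℘(γ)^k) ∩ im(℘(γ)^{k-j-1})).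 -/
open Polynomial

lemma aux_commute_aeval {R A : Type*} [CommSemiring R] [Semiring A] [Algebra R A]
    {x y : A} (hc : Commute x y) (f : R[X]) : Commute x (Polynomial.aeval y f) := by
  induction f using Polynomial.induction_on' with
  | add p q hp hq => rw [map_add]; exact hp.add_right hq
  | monomial n a =>
      rw [Polynomial.aeval_monomial]
      exact Commute.mul_right ((Algebra.commutes a x).symm) (hc.pow_right n)

lemma aux_aeval_reflect {R A : Type*} [CommSemiring R] [Semiring A] [Algebra R A]
    {g gi : A} (h1 : g * gi = 1) (h2 : gi * g = 1) (N : ℕ) :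
    ∀ f : R[X], f.natDegree ≤ N →
      Polynomial.aeval g (f.reflect N) = g ^ N * Polynomial.aeval gi f := by
  have hcom : Commute g gi := h1.trans h2.symm
  have hpow : ∀ n : ℕ, n ≤ N → g ^ N * gi ^ n = g ^ (N - n) := by
    intro n hn
    have hone : g ^ n * gi ^ n = 1 := by rw [← hcom.mul_pow, h1, one_pow]
    calc g ^ N * gi ^ n = g ^ (N - n) * (g ^ n * gi ^ n) := by
          rw [← mul_assoc, ← pow_add, Nat.sub_add_cancel hn]
      _ = g ^ (N - n) := by rw [hone, mul_one]
  refine Polynomial.induction_with_natDegree_le _ N ?_ ?_ ?_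
  · simp
  · intro n r _ hn
    rw [Polynomial.reflect_C_mul_X_pow, Polynomial.revAt_le hn]
    simp only [map_mul, Polynomial.aeval_C, map_pow, Polynomial.aeval_X]
    rw [← mul_assoc, ← Algebra.commutes r (g ^ N), mul_assoc, hpow n hn]
  · intro f g' _ _ hf hg
    rw [Polynomial.reflect_add, map_add, map_add, mul_add, hf, hg]

/-- For a `℘`-primary unitary automorphism with `℘ = σ(℘)^∨`, the orthogonal
complement of `Fil^{j+1} V` equals `Fil^{-j} V = Σ_{k≥1}(ker ℘(γ)^k ∩ im ℘(γ)^{k-j-1})`,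
where `im ℘(γ)^n = V` for `n ≤ 0` (here realised by truncated subtraction). -/
theorem orthogonal_complement_of_filtration
    {E V : Type*} [Field E] [AddCommGroup V] [Module E V] [FiniteDimensional E V]
    (σ : E ≃+* E) (hσ : ∀ x, σ (σ x) = x) (hσne : σ ≠ RingEquiv.refl E)
    (h : V →ₛₗ[σ.toRingHom] (V →ₗ[E] E))
    (hherm : ∀ v w : V, h w v = σ (h v w))
    (hnd : ∀ v : V, (∀ w : V, h v w = 0) → v = 0)
    (γ : V ≃ₗ[E] V) (hγ : ∀ v w : V, h (γ v) (γ w) = h v w)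
    (℘ : Polynomial E) (hmon : ℘.Monic) (hirr : Irreducible ℘) (h0 : ℘.coeff 0 ≠ 0)
    (hdual : ℘ = dualPoly (℘.map σ.toRingHom))
    (mexp : ℕ) (hmin : minpoly E (γ.toLinearMap : Module.End E V) = ℘ ^ mexp)
    (p : Module.End E V) (hp : p = Polynomial.aeval (γ.toLinearMap : Module.End E V) ℘) :
    ∀ j : ℕ, ∀ v : V,
      (∀ w ∈ (⨆ k : ℕ, ⨆ _ : 1 ≤ k,
          LinearMap.ker (p ^ k) ⊓ LinearMap.range (p ^ (k + j))), h w v = 0) ↔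
        v ∈ (⨆ k : ℕ, ⨆ _ : 1 ≤ k,
          LinearMap.ker (p ^ k) ⊓ LinearMap.range (p ^ (k - (j + 1)))) := by
  classical
  intro j v
  set g : Module.End E V := γ.toLinearMap with hg
  set gi : Module.End E V := γ.symm.toLinearMap with hgi
  have hggi : g * gi = 1 := by
    ext x; simp [hg, hgi, Module.End.mul_apply]
  have hgig : gi * g = 1 := by
    ext x; simp [hg, hgi, Module.End.mul_apply]
  -- base adjunction identities
  have hbase1 : ∀ (v w : V), h (g v) w = h v (gi w) := by
    intro v w
    have := hγ v (γ.symm w)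
    simpa [hg, hgi] using this
  have hbase2 : ∀ (v w : V), h v (g w) = h (gi v) w := by
    intro v w
    have := hγ (γ.symm v) w
    simpa [hg, hgi] using this
  have hpow1 : ∀ (i : ℕ) (v w : V), h ((g ^ i) v) w = h v ((gi ^ i) w) := by
    intro i
    induction i with
    | zero => intro v w; simp
    | succ n ih =>
        intro v w
        calc h ((g ^ (n + 1)) v) w = h ((g ^ n) (g v)) w := by
              rw [pow_succ, Module.End.mul_apply]
          _ = h (g v) ((gi ^ n) w) := ih _ _
          _ = h v (gi ((gi ^ n) w)) := hbase1 _ _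
          _ = h v ((gi ^ (n + 1)) w) := by rw [pow_succ', Module.End.mul_apply]
  have hpow2 : ∀ (i : ℕ) (v w : V), h v ((g ^ i) w) = h ((gi ^ i) v) w := by
    intro i
    induction i with
    | zero => intro v w; simp
    | succ n ih =>
        intro v w
        calc h v ((g ^ (n + 1)) w) = h v ((g ^ n) (g w)) := by
              rw [pow_succ, Module.End.mul_apply]
          _ = h ((gi ^ n) v) (g w) := ih _ _
          _ = h (gi ((gi ^ n) v)) w := hbase2 _ _
          _ = h ((gi ^ (n + 1)) v) w := by rw [pow_succ', Module.End.mul_apply]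
  -- polynomial adjunction
  have adj1 : ∀ (f : E[X]) (v w : V),
      h ((Polynomial.aeval g f) v) w = h v ((Polynomial.aeval gi (f.map σ.toRingHom)) w) := by
    intro f
    induction f using Polynomial.induction_on' with
    | add r s hr hs =>
        intro v w
        simp only [Polynomial.map_add, map_add, LinearMap.add_apply]
        rw [hr, hs]
    | monomial n c =>
        intro v w
        rw [Polynomial.map_monomial]
        simp only [Polynomial.aeval_monomial, Module.End.mul_apply,
          Module.algebraMap_end_apply, LinearMap.map_smulₛₗ, LinearMap.smul_apply,
          map_smul, smul_eq_mul, RingEquiv.coe_toRingHom]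
        rw [hpow1]
  have adj2 : ∀ (f : E[X]) (v w : V),
      h v ((Polynomial.aeval g f) w) = h ((Polynomial.aeval gi (f.map σ.toRingHom)) v) w := by
    intro f
    induction f using Polynomial.induction_on' with
    | add r s hr hs =>
        intro v w
        simp only [Polynomial.map_add, map_add, LinearMap.add_apply]
        rw [hr, hs]
    | monomial n c =>
        intro v w
        rw [Polynomial.map_monomial]
        simp only [Polynomial.aeval_monomial, Module.End.mul_apply,
          Module.algebraMap_end_apply, LinearMap.map_smulₛₗ, LinearMap.smul_apply,
          map_smul, smul_eq_mul, RingEquiv.coe_toRingHom]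
        rw [hpow2, show σ.toRingHom (σ.toRingHom c) = c from hσ c]
  set f : E[X] := ℘.map σ.toRingHom with hf
  set q : Module.End E V := Polynomial.aeval gi f with hq
  have adjP1 : ∀ (m : ℕ) (v w : V), h ((p ^ m) v) w = h v ((q ^ m) w) := by
    intro m v w
    have h1 := adj1 (℘ ^ m) v w
    rw [map_pow, ← hp, Polynomial.map_pow, map_pow, ← hf, ← hq] at h1
    exact h1
  have adjP2 : ∀ (m : ℕ) (v w : V), h v ((p ^ m) w) = h ((q ^ m) v) w := by
    intro m v w
    have h1 := adj2 (℘ ^ m) v w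
    rw [map_pow, ← hp, Polynomial.map_pow, map_pow, ← hf, ← hq] at h1
    exact h1
  -- nilpotency
  have hpN : p ^ mexp = 0 := by
    have h1 := minpoly.aeval E g
    rw [hmin, map_pow, ← hp] at h1
    exact h1
  -- the constant c₀
  set c₀ : E := σ (℘.coeff 0) with hc₀def
  have hc₀ : c₀ ≠ 0 := by
    intro hc
    exact h0 (σ.injective (by rw [hc₀def] at hc; rw [hc, map_zero]))
  have hc0f : f.coeff 0 = c₀ := by
    rw [hf, Polynomial.coeff_map]; rfl
  have hrev : f.reverse = Polynomial.C c₀ * ℘ := by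
    have hd : ℘ = Polynomial.C c₀⁻¹ * f.reverse := by
      rw [hdual, dualPoly, hc0f]
    calc f.reverse = Polynomial.C (c₀ * c₀⁻¹) * f.reverse := by
          rw [mul_inv_cancel₀ hc₀, Polynomial.C_1, one_mul]
      _ = Polynomial.C c₀ * (Polynomial.C c₀⁻¹ * f.reverse) := by
          rw [Polynomial.C_mul, mul_assoc]
      _ = Polynomial.C c₀ * ℘ := by rw [← hd]
  set d : ℕ := f.natDegree with hd
  have key : g ^ d * q = c₀ • p := by
    have h1 := aux_aeval_reflect hggi hgig d f le_rfl
    have h2 : f.reflect d = f.reverse := rfl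
    rw [h2, hrev, map_mul, Polynomial.aeval_C, ← hp, ← hq] at h1
    rw [← h1, Algebra.smul_def]
  have hcomgg : Commute gi g := hgig.trans hggi.symm
  have hgipow : ∀ n : ℕ, gi ^ n * g ^ n = 1 := by
    intro n; rw [← hcomgg.mul_pow, hgig, one_pow]
  have hgpow : ∀ n : ℕ, g ^ n * gi ^ n = 1 := by
    intro n; rw [← hcomgg.symm.mul_pow, hggi, one_pow]
  have hq_eq : q = c₀ • (gi ^ d * p) := by
    have h1 : gi ^ d * (g ^ d * q) = q := by
      rw [← mul_assoc, hgipow, one_mul]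
    rw [key] at h1
    rw [← h1, mul_smul_comm]
  have hcomgip : Commute gi p := by
    rw [hp]; exact aux_commute_aeval hcomgg ℘
  have hcomgp : Commute g p := by
    rw [hp]; exact aux_commute_aeval (Commute.refl g) ℘
  have hqm : ∀ m : ℕ, q ^ m = (c₀ ^ m) • (gi ^ (d * m) * p ^ m) := by
    intro m
    rw [hq_eq, _root_.smul_pow, (hcomgip.pow_left d).mul_pow, ← pow_mul]
  -- pointwise inverses and commutation
  have hginv : ∀ (n : ℕ) (x : V), (g ^ n) ((gi ^ n) x) = x := by
    intro n x
    calc (g ^ n) ((gi ^ n) x) = (g ^ n * gi ^ n) x := (Module.End.mul_apply _ _ _).symm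
      _ = x := by rw [hgpow]; rfl
  have hginv' : ∀ (n : ℕ) (x : V), (gi ^ n) ((g ^ n) x) = x := by
    intro n x
    calc (gi ^ n) ((g ^ n) x) = (gi ^ n * g ^ n) x := (Module.End.mul_apply _ _ _).symm
      _ = x := by rw [hgipow]; rfl
  have hpgi : ∀ (a b : ℕ) (x : V), (p ^ a) ((gi ^ b) x) = (gi ^ b) ((p ^ a) x) := by
    intro a b x
    calc (p ^ a) ((gi ^ b) x) = (p ^ a * gi ^ b) x := (Module.End.mul_apply _ _ _).symm
      _ = (gi ^ b * p ^ a) x := by rw [(hcomgip.symm.pow_pow a b).eq]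
      _ = (gi ^ b) ((p ^ a) x) := Module.End.mul_apply _ _ _
  have hpg : ∀ (a b : ℕ) (x : V), (p ^ a) ((g ^ b) x) = (g ^ b) ((p ^ a) x) := by
    intro a b x
    calc (p ^ a) ((g ^ b) x) = (p ^ a * g ^ b) x := (Module.End.mul_apply _ _ _).symm
      _ = (g ^ b * p ^ a) x := by rw [(hcomgp.symm.pow_pow a b).eq]
      _ = (g ^ b) ((p ^ a) x) := Module.End.mul_apply _ _ _
  -- kernel and range of q-powers agree with p-powers
  have hker : ∀ (m : ℕ) (x : V), (q ^ m) x = 0 ↔ (p ^ m) x = 0 := by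
    intro m x
    rw [hqm m, LinearMap.smul_apply, Module.End.mul_apply]
    constructor
    · intro hx
      have h1 : (gi ^ (d * m)) ((p ^ m) x) = 0 := by
        rcases smul_eq_zero.mp hx with hc | hy
        · exact absurd hc (pow_ne_zero m hc₀)
        · exact hy
      calc (p ^ m) x = (g ^ (d * m)) ((gi ^ (d * m)) ((p ^ m) x)) := (hginv _ _).symm
        _ = 0 := by rw [h1, map_zero]
    · intro hx; rw [hx, map_zero, smul_zero]
  have hrange : ∀ (m : ℕ) (y : V), (∃ x, (q ^ m) x = y) ↔ (∃ x, (p ^ m) x = y) := by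
    intro m y
    constructor
    · rintro ⟨x, rfl⟩
      refine ⟨(c₀ ^ m) • ((gi ^ (d * m)) x), ?_⟩
      rw [hqm m, LinearMap.smul_apply, Module.End.mul_apply, map_smul, hpgi]
    · rintro ⟨x, rfl⟩
      refine ⟨(c₀⁻¹ ^ m) • ((g ^ (d * m)) x), ?_⟩
      rw [hqm m, LinearMap.smul_apply, Module.End.mul_apply, map_smul, map_smul,
        hpg, hginv', smul_smul, ← mul_pow, mul_inv_cancel₀ hc₀, one_pow, one_smul]
  -- right nondegeneracy
  have hnd' : ∀ x : V, (∀ w, h w x = 0) → x = 0 := by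
    intro x hx
    refine hnd x fun w => σ.injective ?_
    rw [← hherm x w, hx w, map_zero]
  -- surjectivity of h onto the dual
  haveI : RingHomSurjective σ.toRingHom := ⟨σ.surjective⟩
  have hsurj : ∀ φ : V →ₗ[E] E, ∃ w, h w = φ := by
    intro φ
    by_contra hφ
    have hφ' : φ ∉ LinearMap.range h := by
      rw [LinearMap.mem_range]; exact fun ⟨w, hw⟩ => hφ ⟨w, hw⟩
    obtain ⟨Φ, hΦx, hΦbot⟩ :=
      Submodule.exists_dual_map_eq_bot_of_notMem hφ' inferInstance
    have hv0z : ∀ w, h w ((Module.evalEquiv E V).symm Φ) = 0 := by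
      intro w
      have hmem : (h w) ∈ LinearMap.range h := ⟨w, rfl⟩
      have h2 : Φ (h w) ∈ (LinearMap.range h).map Φ := Submodule.mem_map_of_mem hmem
      rw [hΦbot, Submodule.mem_bot] at h2
      rw [Module.apply_evalEquiv_symm_apply, h2]
    have hz : (Module.evalEquiv E V).symm Φ = 0 := hnd' _ hv0z
    have hΦ0 : Φ = 0 := by
      rw [← (Module.evalEquiv E V).apply_symm_apply Φ, hz, map_zero]
    rw [hΦ0] at hΦx
    exact hΦx rfl
  -- separating vectors for non-membership in ranges
  have hsep : ∀ (m : ℕ) (x : V), x ∉ LinearMap.range (p ^ m) →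
      ∃ w : V, (∀ u, h w ((p ^ m) u) = 0) ∧ h w x ≠ 0 := by
    intro m x hx
    obtain ⟨φ, hφx, hφbot⟩ := Submodule.exists_dual_map_eq_bot_of_notMem hx inferInstance
    obtain ⟨w, rfl⟩ := hsurj φ
    refine ⟨w, fun u => ?_, hφx⟩
    have h2 : (h w) ((p ^ m) u) ∈ (LinearMap.range (p ^ m)).map (h w) :=
      Submodule.mem_map_of_mem ⟨u, rfl⟩
    rw [hφbot, Submodule.mem_bot] at h2
    exact h2
  -- kernel monotonicity
  have kerM : ∀ {a b : ℕ}, a ≤ b → ∀ x : V, (p ^ a) x = 0 → (p ^ b) x = 0 := by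
    intro a b hab x hx
    have h1 : p ^ b = p ^ (b - a) * p ^ a := by
      rw [← pow_add, Nat.sub_add_cancel hab]
    rw [h1, Module.End.mul_apply, hx, map_zero]
  -- core orthogonality computation
  have core : ∀ (a kk : ℕ), ∀ w ∈ LinearMap.ker (p ^ kk) ⊓ LinearMap.range (p ^ (kk + j)),
      ∀ x ∈ LinearMap.ker (p ^ a) ⊓ LinearMap.range (p ^ (a - (j + 1))), h w x = 0 := by
    intro a kk w hw x hx
    rw [Submodule.mem_inf] at hw hx
    obtain ⟨hwk, hwr⟩ := hw
    obtain ⟨hxk, hxr⟩ := hx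
    rw [LinearMap.mem_ker] at hwk hxk
    by_cases hak : a ≤ kk + j
    · obtain ⟨u, hu⟩ := hwr
      rw [← hu, adjP1]
      have h1 : (q ^ (kk + j)) x = 0 := (hker _ _).mpr (kerM hak x hxk)
      rw [h1, map_zero]
    · push_neg at hak
      obtain ⟨u, hu⟩ := hxr
      rw [← hu, adjP2]
      have hkm : kk ≤ a - (j + 1) := by omega
      have h1 : (q ^ (a - (j + 1))) w = 0 := (hker _ _).mpr (kerM hkm w hwk)
      rw [h1, map_zero, LinearMap.zero_apply]
  constructor
  · -- hard direction
    intro H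
    have hDec : ∀ k : ℕ, 1 ≤ k → ∃ z y : V, (p ^ (k + j)) y = 0 ∧ v = (p ^ k) z + y := by
      intro k hk
      by_cases hin : (p ^ (k + j)) v ∈ LinearMap.range (p ^ (k + j + k))
      · obtain ⟨z, hz⟩ := hin
        refine ⟨z, v - (p ^ k) z, ?_, by abel⟩
        rw [map_sub]
        have h1 : (p ^ (k + j)) ((p ^ k) z) = (p ^ (k + j + k)) z := by
          rw [← Module.End.mul_apply, ← pow_add]
        rw [h1, hz, sub_self]
      · exfalso
        obtain ⟨w, hw0, hwx⟩ := hsep _ _ hin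
        have hqw : (q ^ (k + j + k)) w = 0 := by
          refine hnd _ fun u => ?_
          rw [← adjP2]
          exact hw0 u
        set w' : V := (q ^ (k + j)) w with hw'
        have hw'k : (p ^ k) w' = 0 := by
          rw [← hker, hw', ← Module.End.mul_apply, ← pow_add]
          have he : k + (k + j) = k + j + k := by omega
          rw [he]
          exact hqw
        have hw'r : w' ∈ LinearMap.range (p ^ (k + j)) := by
          rw [LinearMap.mem_range]
          exact (hrange (k + j) w').mp ⟨w, hw'.symm⟩
        have hw'mem : w' ∈ (⨆ k : ℕ, ⨆ _ : 1 ≤ k,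
            LinearMap.ker (p ^ k) ⊓ LinearMap.range (p ^ (k + j))) :=
          Submodule.mem_iSup_of_mem k (Submodule.mem_iSup_of_mem hk
            (Submodule.mem_inf.mpr ⟨LinearMap.mem_ker.mpr hw'k, hw'r⟩))
        have hzero := H w' hw'mem
        refine hwx ?_
        rw [adjP2]
        exact hzero
    -- downward induction on nilpotency degree
    have claim : ∀ t m : ℕ, mexp ≤ m + t → ∀ x : V, x ∈ LinearMap.range (p ^ m) →
        (∀ k, m + 1 ≤ k → ∃ z y : V, (p ^ (k + j)) y = 0 ∧ x = (p ^ k) z + y) →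
        x ∈ (⨆ k : ℕ, ⨆ _ : 1 ≤ k,
          LinearMap.ker (p ^ k) ⊓ LinearMap.range (p ^ (k - (j + 1)))) := by
      intro t
      induction t with
      | zero =>
          intro m hm x hxr _
          obtain ⟨u, hu⟩ := hxr
          have hpm : p ^ m = 0 := by
            have h1 : p ^ m = p ^ (m - mexp) * p ^ mexp := by
              rw [← pow_add, Nat.sub_add_cancel (by omega)]
            rw [h1, hpN, mul_zero]
          have : x = 0 := by rw [← hu, hpm, LinearMap.zero_apply]
          rw [this]; exact zero_mem _
      | succ t ih =>
          intro m hm x hxr hdec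
          obtain ⟨z, y, hy0, hxe⟩ := hdec (m + 1) le_rfl
          obtain ⟨u, hu⟩ := hxr
          have hyr : y = (p ^ m) (u - p z) := by
            have h1 : (p ^ (m + 1)) z = (p ^ m) (p z) := by
              rw [pow_succ, Module.End.mul_apply]
            rw [map_sub]
            have h2 : y = x - (p ^ (m + 1)) z := by rw [hxe]; abel
            rw [h2, ← hu, h1]
          have hy_mem : y ∈ (⨆ k : ℕ, ⨆ _ : 1 ≤ k,
              LinearMap.ker (p ^ k) ⊓ LinearMap.range (p ^ (k - (j + 1)))) := by
            refine Submodule.mem_iSup_of_mem (m + 1 + j)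
              (Submodule.mem_iSup_of_mem (show (1 : ℕ) ≤ m + 1 + j by omega) ?_)
            have e : m + 1 + j - (j + 1) = m := by omega
            rw [e]
            exact Submodule.mem_inf.mpr ⟨LinearMap.mem_ker.mpr hy0, ⟨u - p z, hyr.symm⟩⟩
          have hx1 : (p ^ (m + 1)) z ∈ (⨆ k : ℕ, ⨆ _ : 1 ≤ k,
              LinearMap.ker (p ^ k) ⊓ LinearMap.range (p ^ (k - (j + 1)))) := by
            refine ih (m + 1) (by omega) _ ⟨z, rfl⟩ ?_
            intro k hk
            obtain ⟨z', y', hy'0, hxe'⟩ := hdec k (by omega)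
            refine ⟨z', y' - y, ?_, ?_⟩
            · rw [map_sub, hy'0, kerM (by omega : m + 1 + j ≤ k + j) y hy0, sub_zero]
            · have h1 : (p ^ (m + 1)) z = x - y := by rw [hxe]; abel
              rw [h1, hxe']; abel
          have hfin : x ∈ (⨆ k : ℕ, ⨆ _ : 1 ≤ k,
              LinearMap.ker (p ^ k) ⊓ LinearMap.range (p ^ (k - (j + 1)))) := by
            rw [hxe]; exact add_mem hx1 hy_mem
          exact hfin
    refine claim mexp 0 (by omega) v ⟨v, ?_⟩ (fun k hk => hDec k (by omega))
    simp
  · -- easy direction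
    intro hv w hw
    have hvle : ∀ (kk : ℕ) (u : V),
        u ∈ LinearMap.ker (p ^ kk) ⊓ LinearMap.range (p ^ (kk + j)) → h u v = 0 := by
      intro kk u hwm
      have hle : (⨆ k : ℕ, ⨆ _ : 1 ≤ k,
          LinearMap.ker (p ^ k) ⊓ LinearMap.range (p ^ (k - (j + 1)))) ≤
          LinearMap.ker (h u) := by
        refine iSup_le fun a => iSup_le fun _ => ?_
        intro x hx
        exact LinearMap.mem_ker.mpr (core a kk u hwm x hx)
      exact LinearMap.mem_ker.mp (hle hv)
    refine Submodule.iSup_induction (motive := fun u => h u v = 0) _ hw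
      (fun kk x hx => ?_) (by rw [map_zero, LinearMap.zero_apply]) (fun x y hx hy => ?_)
    · by_cases hkk : 1 ≤ kk
      · rw [iSup_pos hkk] at hx
        exact hvle kk x hx
      · rw [iSup_neg hkk] at hx
        rw [Submodule.mem_bot] at hx
        rw [hx, map_zero, LinearMap.zero_apply]
    · show h (x + y) v = 0
      rw [map_add, LinearMap.add_apply, hx, hy, add_zero]
end
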